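/- Let S = ℤ[p₁, e, b]/(2b). For every pair of natural numbers (j₁, j₂) with j₂ even, the monomial p₁^{j₁} e^{j₂} is in the image of the map φ: ℤ[d₂, d₄] → S defined by φ(d₂) = −p₁, φ(d₄) = e²; conversely, p₁^{j₁} e^{j₂} with j₂ odd is not in the subring of S generated by −p₁, e², 2e, and b². -/

import Mathlib

open MvPolynomial

/-- The defining ideal of `H^*(BSO₄; ℤ) = ℤ[p₁, e, b]/(2b)`, with variables
`X 0 = p₁`, `X 1 = e = √p₂`, `X 2 = b = β̃w₂`. -/
noncomputable def cohIdeal : Ideal (MvPolynomial (Fin 3) ℤ) :=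
  Ideal.span {2 * X 2}

/-- The integral cohomology ring of `BSO₄`. -/
noncomputable abbrev CohS : Type := MvPolynomial (Fin 3) ℤ ⧸ cohIdeal

/-!
Sending `p₁ ↦ 1`, `e ↦ X`, `b ↦ 0` and reducing mod 2 gives a ring map `S → 𝔽₂[X]` under which
`-p₁`, `e²`, `2e` and `b²` all become squares. In characteristic 2 the squares form a subring
(the image of Frobenius), so the subring they generate consists of squares, whereas
`p₁^{j₁} e^{j₂} ↦ X^{j₂}` has odd degree and is not a square.
-/

theorem Polynomial.X_pow_ne_sq {R : Type*} [Semiring R] [NoZeroDivisors R] [Nontrivial R]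
    {n : ℕ} (hn : Odd n) (g : Polynomial R) : Polynomial.X ^ n ≠ g ^ 2 := by
  intro h
  have hdeg := congrArg Polynomial.natDegree h
  rw [Polynomial.natDegree_X_pow, Polynomial.natDegree_pow] at hdeg
  exact Nat.not_even_iff_odd.mpr hn ⟨g.natDegree, by omega⟩

theorem Polynomial.X_pow_notMem_range_frobenius {R : Type*} [CommRing R] [IsDomain R] [CharP R 2]
    {n : ℕ} (hn : Odd n) :
    (Polynomial.X : Polynomial R) ^ n ∉ (frobenius (Polynomial R) 2).range := by
  rintro ⟨g, hg⟩
  exact Polynomial.X_pow_ne_sq hn g (by rw [← hg, frobenius_def])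

noncomputable def CohS.toZModTwo : CohS →+* Polynomial (ZMod 2) :=
  Ideal.Quotient.lift cohIdeal
    (aeval (R := ℤ) (![1, Polynomial.X, 0] : Fin 3 → Polynomial (ZMod 2))).toRingHom fun _ ha =>
    (Ideal.span_singleton_le_iff_mem (RingHom.ker _)).mpr (by simp [RingHom.mem_ker]) ha

theorem CohS.closure_le_comap_range_frobenius :
    Subring.closure
        {-(Ideal.Quotient.mk cohIdeal (X 0)),
         Ideal.Quotient.mk cohIdeal (X 1) ^ 2,
         2 * Ideal.Quotient.mk cohIdeal (X 1),
         Ideal.Quotient.mk cohIdeal (X 2) ^ 2} ≤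
      (frobenius (Polynomial (ZMod 2)) 2).range.comap CohS.toZModTwo := by
  rw [Subring.closure_le]
  rintro x (rfl | rfl | rfl | rfl)
  · exact ⟨1, by simp [CohS.toZModTwo, frobenius_def, CharTwo.neg_eq]⟩
  · exact ⟨Polynomial.X, by simp [CohS.toZModTwo, frobenius_def]⟩
  · exact ⟨0, by simp [CohS.toZModTwo, frobenius_def, map_ofNat, CharTwo.two_eq_zero]⟩
  · exact ⟨0, by simp [CohS.toZModTwo, frobenius_def]⟩

/-- Monomials `p₁^{j₁} e^{j₂}` with `j₂` even lie in the image of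
`ℤ[d₂,d₄] → S`, `d₂ ↦ -p₁`, `d₄ ↦ e²`; but with `j₂` odd they do not lie in the
subring of `S` generated by `-p₁`, `e²`, `2e` and `b²`. -/
theorem stmt_18 :
    (∀ j₁ k : ℕ,
      Ideal.Quotient.mk cohIdeal (X 0 ^ j₁ * X 1 ^ (2 * k)) ∈
        Set.range ⇑(MvPolynomial.aeval (R := ℤ)
          ![-(Ideal.Quotient.mk cohIdeal (X 0)),
            Ideal.Quotient.mk cohIdeal (X 1) ^ 2] :
          MvPolynomial (Fin 2) ℤ →ₐ[ℤ] CohS)) ∧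
    (∀ j₁ j₂ : ℕ, Odd j₂ →
      Ideal.Quotient.mk cohIdeal (X 0 ^ j₁ * X 1 ^ j₂) ∉
        Subring.closure
          {-(Ideal.Quotient.mk cohIdeal (X 0)),
           Ideal.Quotient.mk cohIdeal (X 1) ^ 2,
           2 * Ideal.Quotient.mk cohIdeal (X 1),
           Ideal.Quotient.mk cohIdeal (X 2) ^ 2}) := by
  refine ⟨fun j₁ k => ⟨(-X 0) ^ j₁ * X 1 ^ k, by simp [pow_mul]⟩, fun j₁ j₂ hodd hmem => ?_⟩
  have himage := CohS.closure_le_comap_range_frobenius hmem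
  rw [Subring.mem_comap] at himage
  have hmonomial : CohS.toZModTwo (Ideal.Quotient.mk cohIdeal (X 0 ^ j₁ * X 1 ^ j₂)) =
      Polynomial.X ^ j₂ := by
    simp [CohS.toZModTwo]
  exact Polynomial.X_pow_notMem_range_frobenius hodd (hmonomial ▸ himage)
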